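/- arXiv:1604.03306 — 2 statements merged into one kernel-verified Lean document; each statement's English description precedes it below -/
import Mathlib

section
/- Let A be an m×n real matrix, x ∈ ℝⁿ, and let W ⊆ {1,…,n} be a nonempty index set. Let S > 0 and C > 0 be real numbers and let t = (√(S+1)−1)/√S or t = −(√(S+1)−1)/√S. For each i ∈ W define tᵢ = −(C/2)(1−t²) if ⟨Ax, Aeᵢ⟩ ≥ 0 and tᵢ = +(C/2)(1−t²) if ⟨Ax, Aeᵢ⟩ < 0, where eᵢ ∈ ℝⁿ is the i-th standard basis vector. Then t² < 1 and ‖A(x + Σ_{i∈W} tᵢ eᵢ)‖₂² − ‖A(t²x − Σ_{i∈W} tᵢ eᵢ)‖₂² = (1−t⁴)(⟨Ax, Ax⟩ − C Σ_{i∈W} |⟨Ax, Aeᵢ⟩|). -/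
open scoped InnerProductSpace BigOperators

/-- Regard a plain vector in `Fin m → ℝ` as an element of Euclidean space
(so that `‖·‖` is the Euclidean norm and `⟪·,·⟫_ℝ` the Euclidean inner product). -/
noncomputable def toE {m : ℕ} (v : Fin m → ℝ) : EuclideanSpace ℝ (Fin m) := WithLp.toLp 2 v

/-- The `j`-th column of the matrix `A`, viewed as a vector in Euclidean space. -/
noncomputable def col {m n : ℕ} (A : Matrix (Fin m) (Fin n) ℝ) (j : Fin n) :
    EuclideanSpace ℝ (Fin m) := WithLp.toLp 2 (fun i => A i j)

/-! With `u = Ax` and `w = Σ tᵢ Aeᵢ`, expanding both squares gives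
`‖u + w‖² - ‖t²u - w‖² = (1 - t⁴)‖u‖² + 2(1 + t²)⟪u, w⟫`, and the sign choice of the `tᵢ`
makes `⟪u, w⟫ = -(C/2)(1 - t²) Σ |⟪u, Aeᵢ⟫|`. The bound `t² < 1` is
`(√(S+1) - 1)² < S`, i.e. `1 < √(S+1)`. -/

theorem sq_sqrt_succ_sub_one_div_sqrt_lt_one {S : ℝ} (hS : 0 < S) :
    ((Real.sqrt (S + 1) - 1) / Real.sqrt S) ^ 2 < 1 := by
  have hs : Real.sqrt S ^ 2 = S := Real.sq_sqrt hS.le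
  have hs1 : Real.sqrt (S + 1) ^ 2 = S + 1 := Real.sq_sqrt (by linarith)
  have one_lt : 1 < Real.sqrt (S + 1) := by
    rw [Real.lt_sqrt zero_le_one]
    linarith
  rw [div_pow, div_lt_one (by positivity)]
  nlinarith

theorem norm_add_sq_sub_norm_smul_sub_sq {E : Type*} [NormedAddCommGroup E]
    [InnerProductSpace ℝ E] (u w : E) (c : ℝ) :
    ‖u + w‖ ^ 2 - ‖c • u - w‖ ^ 2 = (1 - c ^ 2) * ‖u‖ ^ 2 + 2 * (1 + c) * ⟪u, w⟫_ℝ := by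
  rw [norm_add_sq_real, norm_sub_sq_real, real_inner_smul_left, norm_smul, mul_pow,
    Real.norm_eq_abs, sq_abs]
  ring

theorem inner_sum_neg_sign_smul {E ι : Type*} [NormedAddCommGroup E] [InnerProductSpace ℝ E]
    (u : E) (v : ι → E) (s : Finset ι) (a : ℝ) (c : ι → ℝ)
    (hc : ∀ i ∈ s, c i = if 0 ≤ ⟪u, v i⟫_ℝ then -a else a) :
    ⟪u, ∑ i ∈ s, c i • v i⟫_ℝ = -a * ∑ i ∈ s, |⟪u, v i⟫_ℝ| := by
  rw [inner_sum, Finset.mul_sum]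
  refine Finset.sum_congr rfl fun i hi => ?_
  rw [real_inner_smul_right, hc i hi]
  split_ifs with h
  · rw [abs_of_nonneg h]
  · rw [abs_of_neg (not_le.mp h)]
    ring

theorem toE_add {m : ℕ} (v w : Fin m → ℝ) : toE (v + w) = toE v + toE w := rfl

theorem toE_smul {m : ℕ} (c : ℝ) (v : Fin m → ℝ) : toE (c • v) = c • toE v := rfl

theorem toE_sub {m : ℕ} (v w : Fin m → ℝ) : toE (v - w) = toE v - toE w := rfl

theorem toE_mulVec_sum_smul_single {m n : ℕ} (A : Matrix (Fin m) (Fin n) ℝ)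
    (s : Finset (Fin n)) (c : Fin n → ℝ) :
    toE (A.mulVec (∑ i ∈ s, c i • Pi.single i 1)) = ∑ i ∈ s, c i • col A i := by
  ext j
  simp [toE, col, Matrix.mulVec_sum, Matrix.mulVec_smul, Matrix.mulVec_single, mul_comm]

theorem stmt0_general {m n : ℕ} (A : Matrix (Fin m) (Fin n) ℝ) (x : Fin n → ℝ)
    (W : Finset (Fin n))
    (S C t : ℝ) (hS : 0 < S)
    (ht : t = (Real.sqrt (S + 1) - 1) / Real.sqrt S ∨
          t = -((Real.sqrt (S + 1) - 1) / Real.sqrt S))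
    (tc : Fin n → ℝ)
    (htc : ∀ i ∈ W,
      tc i = if 0 ≤ ⟪toE (A.mulVec x), col A i⟫_ℝ
             then -(C / 2) * (1 - t ^ 2) else (C / 2) * (1 - t ^ 2)) :
    t ^ 2 < 1 ∧
    ‖toE (A.mulVec (x + ∑ i ∈ W, tc i • (Pi.single i 1 : Fin n → ℝ)))‖ ^ 2
      - ‖toE (A.mulVec (t ^ 2 • x - ∑ i ∈ W, tc i • (Pi.single i 1 : Fin n → ℝ)))‖ ^ 2
    = (1 - t ^ 4) * (⟪toE (A.mulVec x), toE (A.mulVec x)⟫_ℝ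
        - C * ∑ i ∈ W, |⟪toE (A.mulVec x), col A i⟫_ℝ|) := by
  refine ⟨?_, ?_⟩
  · rcases ht with rfl | rfl
    · exact sq_sqrt_succ_sub_one_div_sqrt_lt_one hS
    · simpa using sq_sqrt_succ_sub_one_div_sqrt_lt_one hS
  rw [Matrix.mulVec_add, Matrix.mulVec_sub, Matrix.mulVec_smul, toE_add, toE_sub, toE_smul,
    toE_mulVec_sum_smul_single, norm_add_sq_sub_norm_smul_sub_sq,
    inner_sum_neg_sign_smul _ _ _ _ _ fun i hi => by rw [htc i hi, neg_mul], real_inner_self_eq_norm_sq]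
  ring

/-- Lemma 2 of Chen–Ge: for `S, C > 0`, `t = ±(√(S+1)−1)/√S`, and signs `tᵢ`
chosen according to the sign of `⟨Ax, Aeᵢ⟩`, one has `t² < 1` and the stated
identity for the difference of the two squared norms. -/
theorem stmt0 {m n : ℕ} (A : Matrix (Fin m) (Fin n) ℝ) (x : Fin n → ℝ)
    (W : Finset (Fin n)) (hWne : W.Nonempty)
    (S C t : ℝ) (hS : 0 < S) (hC : 0 < C)
    (ht : t = (Real.sqrt (S + 1) - 1) / Real.sqrt S ∨
          t = -((Real.sqrt (S + 1) - 1) / Real.sqrt S))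
    (tc : Fin n → ℝ)
    (htc : ∀ i ∈ W,
      tc i = if 0 ≤ ⟪toE (A.mulVec x), col A i⟫_ℝ
             then -(C / 2) * (1 - t ^ 2) else (C / 2) * (1 - t ^ 2)) :
    t ^ 2 < 1 ∧
    ‖toE (A.mulVec (x + ∑ i ∈ W, tc i • (Pi.single i 1 : Fin n → ℝ)))‖ ^ 2
      - ‖toE (A.mulVec (t ^ 2 • x - ∑ i ∈ W, tc i • (Pi.single i 1 : Fin n → ℝ)))‖ ^ 2
    = (1 - t ^ 4) * (⟪toE (A.mulVec x), toE (A.mulVec x)⟫_ℝ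
        - C * ∑ i ∈ W, |⟪toE (A.mulVec x), col A i⟫_ℝ|) :=
  stmt0_general A x W S C t hS ht tc htc
end

section
/- Let K, N ≥ 1 be integers and let A be an m×n real matrix satisfying the restricted isometry property of order K+N with constant δ, where δ < 1/√(K/N + 1). Let x ∈ ℝⁿ be a nonzero vector whose support T satisfies 1 ≤ |T| ≤ K. Then for every set W ⊆ {1,…,n} with |W| = N and W ∩ T = ∅, one has max_{i∈T} |⟨Aeᵢ, Ax⟩| > min_{i∈W} |⟨Aeᵢ, Ax⟩|. (Consequently, among the N indices i for which |⟨Aeᵢ, Ax⟩| is largest, at least one belongs to T; i.e., the first iteration of generalized orthogonal matching pursuit selects at least one correct index.) -/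
/-!
Suppose the largest correlation `α` on `T` is at most the smallest one on `W`, and let `s` be
the `±1` sign vector of the correlations on `W`. On the coordinate subspace over `T ∪ W` the
matrix `A` is a `δ`-near-isometry, so by polarization `AᵀA - 1` has norm at most `δ` there; its
components along the orthogonal pair `x`, `s` give
`N (‖Ax‖² - ‖x‖²)² + ‖x‖² ⟪Ax, As⟫² ≤ δ² N ‖x‖⁴`.
But `⟪Ax, As⟫ = ∑_{i ∈ W} |⟪Aeᵢ, Ax⟫| ≥ N α`, while Cauchy–Schwarz on `T` gives
`‖Ax‖² = ∑_{i ∈ T} xᵢ ⟪Aeᵢ, Ax⟫ ≤ √K ‖x‖ α`. Minimizing the resulting quadratic in `‖Ax‖²`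
forces `δ² (K + N) ≥ N`.
-/

open scoped InnerProductSpace BigOperators

/-- The number of nonzero entries of a vector. -/
noncomputable def sparsity {n : ℕ} (z : Fin n → ℝ) : ℕ :=
  (Finset.univ.filter (fun i => z i ≠ 0)).card

/-- `A` satisfies the restricted isometry property of order `s` with constant `δ`:
`(1−δ)‖z‖₂² ≤ ‖Az‖₂² ≤ (1+δ)‖z‖₂²` for every vector `z` with at most `s` nonzero entries. -/
def RIP {m n : ℕ} (A : Matrix (Fin m) (Fin n) ℝ) (s : ℕ) (δ : ℝ) : Prop :=
  ∀ z : Fin n → ℝ, sparsity z ≤ s →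
    (1 - δ) * ‖toE z‖ ^ 2 ≤ ‖toE (A.mulVec z)‖ ^ 2 ∧
    ‖toE (A.mulVec z)‖ ^ 2 ≤ (1 + δ) * ‖toE z‖ ^ 2

section NearIsometry

variable {E F : Type*} [NormedAddCommGroup E] [InnerProductSpace ℝ E]
  [NormedAddCommGroup F] [InnerProductSpace ℝ F]

def IsNearIsometryOn (f : E →ₗ[ℝ] F) (S : Submodule ℝ E) (δ : ℝ) : Prop :=
  ∀ w ∈ S, |‖f w‖ ^ 2 - ‖w‖ ^ 2| ≤ δ * ‖w‖ ^ 2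

variable {f : E →ₗ[ℝ] F} {S : Submodule ℝ E} {δ : ℝ}

theorem IsNearIsometryOn.inner_map_map_sub_inner_le (hf : IsNearIsometryOn f S δ)
    {u v : E} (hu : u ∈ S) (hv : v ∈ S) :
    ⟪f u, f v⟫_ℝ - ⟪u, v⟫_ℝ ≤ δ * (‖u‖ * ‖v‖) := by
  -- polarize at the rescaled pair `‖v‖ • u`, `‖u‖ • v`: both have norm `‖u‖ * ‖v‖`
  set a := ‖v‖ • u
  set b := ‖u‖ • v
  have ha : a ∈ S := S.smul_mem _ hu
  have hb : b ∈ S := S.smul_mem _ hv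
  have hplus := (abs_le.mp (hf (a + b) (S.add_mem ha hb))).2
  have hminus := (abs_le.mp (hf (a - b) (S.sub_mem ha hb))).1
  rw [map_add, norm_add_sq_real, norm_add_sq_real] at hplus
  rw [map_sub, norm_sub_sq_real, norm_sub_sq_real] at hminus
  have hab : ⟪f a, f b⟫_ℝ - ⟪a, b⟫_ℝ = ‖u‖ * ‖v‖ * (⟪f u, f v⟫_ℝ - ⟪u, v⟫_ℝ) := by
    simp only [a, b, map_smul, real_inner_smul_left, real_inner_smul_right]
    ring
  have hna : ‖a‖ = ‖u‖ * ‖v‖ := by simp [a, norm_smul, mul_comm]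
  have hnb : ‖b‖ = ‖u‖ * ‖v‖ := by simp [b, norm_smul]
  have hscaled : ‖u‖ * ‖v‖ * (⟪f u, f v⟫_ℝ - ⟪u, v⟫_ℝ) ≤ ‖u‖ * ‖v‖ * (δ * (‖u‖ * ‖v‖)) := by
    rw [← hab]
    rw [hna, hnb] at hplus hminus
    linear_combination (hplus + hminus) / 4
  rcases (mul_nonneg (norm_nonneg u) (norm_nonneg v)).eq_or_lt with h0 | hpos
  · rcases mul_eq_zero.mp h0.symm with hu0 | hv0
    · simp [norm_eq_zero.mp hu0]
    · simp [norm_eq_zero.mp hv0]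
  · exact le_of_mul_le_mul_left hscaled hpos

theorem IsNearIsometryOn.sq_defect_add_sq_inner_le_of_inner_eq_zero (hf : IsNearIsometryOn f S δ)
    {x y : E} (hx : x ∈ S) (hy : y ∈ S) (hxy : ⟪x, y⟫_ℝ = 0) :
    ‖y‖ ^ 2 * (‖f x‖ ^ 2 - ‖x‖ ^ 2) ^ 2 + ‖x‖ ^ 2 * ⟪f x, f y⟫_ℝ ^ 2
      ≤ (δ * ‖x‖ ^ 2) ^ 2 * ‖y‖ ^ 2 := by
  set p := ‖f x‖ ^ 2 - ‖x‖ ^ 2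
  set q := ⟪f x, f y⟫_ℝ
  set R := ‖y‖ ^ 2 * p ^ 2 + ‖x‖ ^ 2 * q ^ 2
  -- `z` is `‖x‖² ‖y‖²` times the component of `(f† f - 1) x` in the plane of `x` and `y`
  set z := (‖y‖ ^ 2 * p) • x + (‖x‖ ^ 2 * q) • y
  have hpol := hf.inner_map_map_sub_inner_le hx
    (S.add_mem (S.smul_mem (‖y‖ ^ 2 * p) hx) (S.smul_mem (‖x‖ ^ 2 * q) hy))
  have hBz : ⟪f x, f z⟫_ℝ - ⟪x, z⟫_ℝ = R := by
    simp only [z, map_add, map_smul, inner_add_right, real_inner_smul_right,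
      real_inner_self_eq_norm_sq, hxy]
    ring
  have hz : ‖z‖ ^ 2 = ‖x‖ ^ 2 * ‖y‖ ^ 2 * R := by
    rw [norm_add_sq_real, norm_smul, norm_smul, real_inner_smul_left, real_inner_smul_right, hxy]
    simp only [Real.norm_eq_abs, mul_pow, sq_abs]
    ring
  rw [hBz] at hpol
  have hR : 0 ≤ R := by positivity
  have hsq : R ^ 2 ≤ (δ * ‖x‖ ^ 2) ^ 2 * ‖y‖ ^ 2 * R := by
    calc R ^ 2 ≤ (δ * (‖x‖ * ‖z‖)) ^ 2 := pow_le_pow_left₀ hR hpol 2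
      _ = (δ * ‖x‖ ^ 2) ^ 2 * ‖y‖ ^ 2 * R := by rw [mul_pow, mul_pow, hz]; ring
  rcases hR.eq_or_lt with h0 | hpos
  · rw [← h0]; positivity
  · nlinarith

end NearIsometry

section Sparse

variable {m n : ℕ}

lemma inner_toE (u v : Fin m → ℝ) : ⟪toE u, toE v⟫_ℝ = ∑ j, u j * v j := by
  simp [toE, PiLp.inner_apply, mul_comm]

lemma norm_toE_sq (v : Fin m → ℝ) : ‖toE v‖ ^ 2 = ∑ j, v j ^ 2 := by
  rw [← real_inner_self_eq_norm_sq, inner_toE]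
  simp only [sq]

lemma inner_toE_mulVec (A : Matrix (Fin m) (Fin n) ℝ) (z : Fin n → ℝ)
    (v : Fin m → ℝ) :
    ⟪toE (A.mulVec z), toE v⟫_ℝ = ∑ i, z i * ⟪col A i, toE v⟫_ℝ := by
  have hcol : ∀ i, ⟪col A i, toE v⟫_ℝ = ∑ j, A j i * v j := fun i => inner_toE (fun j => A j i) v
  simp only [hcol, inner_toE, Matrix.mulVec, dotProduct, Finset.sum_mul, Finset.mul_sum]
  rw [Finset.sum_comm]
  exact Finset.sum_congr rfl fun i _ => Finset.sum_congr rfl fun j _ => by ring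

lemma sparsity_le_card {z : Fin n → ℝ} {S : Finset (Fin n)} (hz : ∀ i ∉ S, z i = 0) :
    sparsity z ≤ S.card :=
  Finset.card_le_card fun i hi => by_contra fun hiS => (Finset.mem_filter.mp hi).2 (hz i hiS)

def supportedOn (S : Finset (Fin n)) : Submodule ℝ (EuclideanSpace ℝ (Fin n)) where
  carrier := {w | ∀ i ∉ S, w i = 0}
  add_mem' hv hw i hi := by simp [hv i hi, hw i hi]
  zero_mem' _ _ := rfl
  smul_mem' c w hw i hi := by simp [hw i hi]

theorem RIP.isNearIsometryOn {A : Matrix (Fin m) (Fin n) ℝ} {s : ℕ} {δ : ℝ} (h : RIP A s δ)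
    {S : Finset (Fin n)} (hS : S.card ≤ s) :
    IsNearIsometryOn (Matrix.toEuclideanLin A) (supportedOn S) δ := by
  intro w hw
  obtain ⟨hlow, hup⟩ := h w.ofLp ((sparsity_le_card hw).trans hS)
  change (1 - δ) * ‖w‖ ^ 2 ≤ ‖Matrix.toEuclideanLin A w‖ ^ 2 at hlow
  change ‖Matrix.toEuclideanLin A w‖ ^ 2 ≤ (1 + δ) * ‖w‖ ^ 2 at hup
  exact abs_sub_le_iff.mpr ⟨by linarith, by linarith⟩

end Sparse

section SignVector

variable {n : ℕ}

noncomputable def signOn (W : Finset (Fin n)) (c : Fin n → ℝ) : Fin n → ℝ :=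
  fun i => if i ∈ W then (if 0 ≤ c i then 1 else -1) else 0

variable {W : Finset (Fin n)} {c : Fin n → ℝ}

lemma signOn_of_notMem {i : Fin n} (hi : i ∉ W) : signOn W c i = 0 :=
  if_neg hi

lemma signOn_mul_of_mem {i : Fin n} (hi : i ∈ W) : signOn W c i * c i = |c i| := by
  by_cases h : 0 ≤ c i
  · simp [signOn, hi, h, abs_of_nonneg h]
  · simp [signOn, hi, h, abs_of_neg (not_le.mp h)]

lemma sum_signOn_mul : ∑ i, signOn W c i * c i = ∑ i ∈ W, |c i| := by
  rw [← Finset.sum_subset W.subset_univ fun i _ hi => by simp [signOn_of_notMem hi]]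
  exact Finset.sum_congr rfl fun i hi => signOn_mul_of_mem hi

lemma norm_toE_signOn_sq : ‖toE (signOn W c)‖ ^ 2 = W.card := by
  have hsq : ∀ i, signOn W c i ^ 2 = if i ∈ W then 1 else 0 := fun i => by
    by_cases hi : i ∈ W
    · by_cases h : 0 ≤ c i <;> simp [signOn, hi, h]
    · simp [signOn, hi]
  simp [norm_toE_sq, hsq]

lemma inner_toE_signOn_eq_zero {x : Fin n → ℝ} (hx : ∀ i ∈ W, x i = 0) :
    ⟪toE x, toE (signOn W c)⟫_ℝ = 0 := by
  refine (inner_toE x _).trans (Finset.sum_eq_zero fun i _ => ?_)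
  by_cases hi : i ∈ W
  · exact mul_eq_zero_of_left (hx i hi) _
  · exact mul_eq_zero_of_right _ (signOn_of_notMem hi)

lemma inner_mulVec_signOn {m : ℕ} (A : Matrix (Fin m) (Fin n) ℝ) (v : Fin m → ℝ) :
    ⟪toE (A.mulVec (signOn W fun i => ⟪col A i, toE v⟫_ℝ)), toE v⟫_ℝ
      = ∑ i ∈ W, |⟪col A i, toE v⟫_ℝ| := by
  rw [inner_toE_mulVec, sum_signOn_mul]

end SignVector

lemma sq_sum_mul_le_card_mul {ι : Type*} (s : Finset ι) (f g : ι → ℝ) {a : ℝ}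
    (hg : ∀ i ∈ s, |g i| ≤ a) :
    (∑ i ∈ s, f i * g i) ^ 2 ≤ s.card * (∑ i ∈ s, f i ^ 2) * a ^ 2 := by
  have hg2 : ∑ i ∈ s, g i ^ 2 ≤ s.card * a ^ 2 := by
    calc ∑ i ∈ s, g i ^ 2 ≤ ∑ _i ∈ s, a ^ 2 := Finset.sum_le_sum fun i hi => by
          simpa only [sq_abs] using pow_le_pow_left₀ (abs_nonneg _) (hg i hi) 2
      _ = s.card * a ^ 2 := by simp
  calc (∑ i ∈ s, f i * g i) ^ 2 ≤ (∑ i ∈ s, f i ^ 2) * ∑ i ∈ s, g i ^ 2 :=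
        Finset.sum_mul_sq_le_sq_mul_sq s f g
    _ ≤ (∑ i ∈ s, f i ^ 2) * (s.card * a ^ 2) :=
        mul_le_mul_of_nonneg_left hg2 (Finset.sum_nonneg fun i _ => sq_nonneg _)
    _ = s.card * (∑ i ∈ s, f i ^ 2) * a ^ 2 := by ring

lemma sq_sq_norm_mulVec_le {m n : ℕ} (A : Matrix (Fin m) (Fin n) ℝ) {x : Fin n → ℝ}
    {T : Finset (Fin n)} (hx : ∀ i ∉ T, x i = 0) (hT : T.Nonempty) :
    (‖toE (A.mulVec x)‖ ^ 2) ^ 2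
      ≤ T.card * ‖toE x‖ ^ 2 * T.sup' hT (fun i => |⟪col A i, toE (A.mulVec x)⟫_ℝ|) ^ 2 := by
  have hnorm : ‖toE (A.mulVec x)‖ ^ 2 = ∑ i ∈ T, x i * ⟪col A i, toE (A.mulVec x)⟫_ℝ := by
    rw [← real_inner_self_eq_norm_sq, inner_toE_mulVec,
      ← Finset.sum_subset T.subset_univ fun i _ hi => by simp [hx i hi]]
  have hx2 : ‖toE x‖ ^ 2 = ∑ i ∈ T, x i ^ 2 := by
    rw [norm_toE_sq, ← Finset.sum_subset T.subset_univ fun i _ hi => by simp [hx i hi]]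
  rw [hnorm, hx2]
  exact sq_sum_mul_le_card_mul T _ _ fun i hi =>
    Finset.le_sup' (fun i => |⟪col A i, toE (A.mulVec x)⟫_ℝ|) hi

lemma le_sq_mul_add_of_bounds {K N X P θ α δ : ℝ} (hK : 0 < K) (hN : 0 < N) (hX : 0 < X)
    (hα : 0 ≤ α) (hP : P ^ 2 ≤ K * X * α ^ 2) (hθ : N * α ≤ θ)
    (h : N * (P - X) ^ 2 + X * θ ^ 2 ≤ (δ * X) ^ 2 * N) :
    N ≤ δ ^ 2 * (K + N) := by
  have hθsq : (N * α) ^ 2 ≤ θ ^ 2 := pow_le_pow_left₀ (mul_nonneg hN.le hα) hθ 2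
  have hNP : N ^ 2 * P ^ 2 ≤ K * X * θ ^ 2 := by
    nlinarith [mul_le_mul_of_nonneg_left hθsq (mul_nonneg hK.le hX.le)]
  have hquad : N * (K * (P - X) ^ 2 + N * P ^ 2) ≤ N * (δ ^ 2 * K * X ^ 2) := by
    nlinarith [mul_le_mul_of_nonneg_left h hK.le]
  have hquad' := le_of_mul_le_mul_left hquad hN
  -- `(K + N) (K (P - X)² + N P²) = ((K + N) P - K X)² + K N X²`
  have hmin : K * X ^ 2 * N ≤ K * X ^ 2 * (δ ^ 2 * (K + N)) := by
    nlinarith [sq_nonneg ((K + N) * P - K * X), mul_le_mul_of_nonneg_left hquad'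
      (by positivity : (0 : ℝ) ≤ K + N)]
  exact le_of_mul_le_mul_left hmin (by positivity)

lemma one_div_sqrt_le_of_le_sq_mul {K N δ : ℝ} (hK : 0 ≤ K) (hN : 0 < N) (hδ : 0 ≤ δ)
    (h : N ≤ δ ^ 2 * (K + N)) :
    1 / √(K / N + 1) ≤ δ := by
  have ha : 0 < K / N + 1 := by positivity
  have h1 : 1 ≤ δ ^ 2 * (K / N + 1) := by
    rw [div_add_one hN.ne', mul_div_assoc', le_div_iff₀ hN]
    linarith
  rw [div_le_iff₀ (Real.sqrt_pos.mpr ha)]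
  calc 1 = √1 := Real.sqrt_one.symm
    _ ≤ √(δ ^ 2 * (K / N + 1)) := Real.sqrt_le_sqrt h1
    _ = δ * √(K / N + 1) := by rw [Real.sqrt_mul (sq_nonneg δ), Real.sqrt_sq hδ]

theorem stmt3_general {m n : ℕ} (K N : ℕ)
    (A : Matrix (Fin m) (Fin n) ℝ) (δ : ℝ)
    (hδ : δ < 1 / Real.sqrt ((K : ℝ) / N + 1))
    (hRIP : RIP A (K + N) δ)
    (x : Fin n → ℝ) (T : Finset (Fin n)) (hT : ∀ i, i ∈ T ↔ x i ≠ 0)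
    (hTne : T.Nonempty) (hTK : T.card ≤ K)
    (W : Finset (Fin n)) (hWcard : W.card = N) (hWne : W.Nonempty)
    (hWT : Disjoint W T) :
    W.inf' hWne (fun i => |⟪col A i, toE (A.mulVec x)⟫_ℝ|)
      < T.sup' hTne (fun i => |⟪col A i, toE (A.mulVec x)⟫_ℝ|) := by
  by_contra! hle
  set c := fun i => ⟪col A i, toE (A.mulVec x)⟫_ℝ
  set s := signOn W c
  have hK : (0 : ℝ) < K := by exact_mod_cast hTne.card_pos.trans_le hTK
  have hN : (0 : ℝ) < N := by exact_mod_cast hWcard ▸ hWne.card_pos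
  have hxT : ∀ i ∉ T, x i = 0 := fun i hi => not_ne_iff.mp (mt (hT i).mpr hi)
  have hf := hRIP.isNearIsometryOn ((Finset.card_union_le T W).trans (by omega))
  have hxS : toE x ∈ supportedOn (T ∪ W) := fun i hi => hxT i (by simp_all)
  have hsS : toE s ∈ supportedOn (T ∪ W) := fun i hi => signOn_of_notMem (by simp_all)
  have hxs : ⟪toE x, toE s⟫_ℝ = 0 :=
    inner_toE_signOn_eq_zero fun i hi => hxT i (Finset.disjoint_left.mp hWT hi)
  have hX : 0 < ‖toE x‖ ^ 2 := by
    obtain ⟨i, hi⟩ := id hTne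
    exact pow_pos (norm_pos_iff.mpr fun h => (hT i).mp hi (congrArg (fun w => w i) h)) 2
  have hδ0 : 0 ≤ δ := nonneg_of_mul_nonneg_left ((abs_nonneg _).trans (hf _ hxS)) hX
  have hα : 0 ≤ T.sup' hTne fun i => |c i| :=
    (abs_nonneg _).trans (Finset.le_sup' (fun i => |c i|) hTne.choose_spec)
  have hθ : N * T.sup' hTne (fun i => |c i|) ≤ ⟪toE (A.mulVec x), toE (A.mulVec s)⟫_ℝ := by
    rw [real_inner_comm, inner_mulVec_signOn, ← hWcard, ← nsmul_eq_mul]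
    exact Finset.card_nsmul_le_sum _ _ _ fun i hi => hle.trans (Finset.inf'_le _ hi)
  have hP : (‖toE (A.mulVec x)‖ ^ 2) ^ 2 ≤ K * ‖toE x‖ ^ 2 * (T.sup' hTne fun i => |c i|) ^ 2 :=
    (sq_sq_norm_mulVec_le A hxT hTne).trans (by gcongr)
  have hkey := hf.sq_defect_add_sq_inner_le_of_inner_eq_zero hxS hsS hxs
  rw [norm_toE_signOn_sq, hWcard] at hkey
  exact hδ.not_ge (one_div_sqrt_le_of_le_sq_mul hK.le hN hδ0
    (le_sq_mul_add_of_bounds hK hN hX hα hP hθ hkey))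

/-- Theorem 1 of Chen–Ge (first iteration of gOMP succeeds): if `A` satisfies the RIP of
order `K+N` with constant `δ < 1/√(K/N + 1)` and `x` is a nonzero `K`-sparse vector with
support `T`, then for any `W` of size `N` disjoint from `T`,
`max_{i∈T} |⟨Aeᵢ, Ax⟩| > min_{i∈W} |⟨Aeᵢ, Ax⟩|`. -/
theorem stmt3 {m n : ℕ} (K N : ℕ) (hK : 1 ≤ K) (hN : 1 ≤ N)
    (A : Matrix (Fin m) (Fin n) ℝ) (δ : ℝ)
    (hδ : δ < 1 / Real.sqrt ((K : ℝ) / N + 1))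
    (hRIP : RIP A (K + N) δ)
    (x : Fin n → ℝ) (T : Finset (Fin n)) (hT : ∀ i, i ∈ T ↔ x i ≠ 0)
    (hTne : T.Nonempty) (hTK : T.card ≤ K)
    (W : Finset (Fin n)) (hWcard : W.card = N) (hWne : W.Nonempty)
    (hWT : Disjoint W T) :
    W.inf' hWne (fun i => |⟪col A i, toE (A.mulVec x)⟫_ℝ|)
      < T.sup' hTne (fun i => |⟪col A i, toE (A.mulVec x)⟫_ℝ|) :=
  stmt3_general K N A δ hδ hRIP x T hT hTne hTK W hWcard hWne hWT
end
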